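/- Let T : K → H be a relative Rota-Baxter operator with respect to a cocommutative H-module bialgebra (K, ⇀), where H and K are cocommutative. Then the graph Gr_T = {a₁ ⊗ T(a₂) : a ∈ K} is closed under the multiplication of the smash product K ⋊ H: (a₁ # T(a₂))(b₁ # T(b₂)) = (a *_T b)₁ # T((a *_T b)₂), where a *_T b = a₁(T(a₂) ⇀ b). -/

import Mathlib

/-!
Relative Rota–Baxter operators on Hopf algebras (Li–Sheng–Tang).
`K` is a left `H`-module bialgebra via `act : H ⊗ K →ₗ K`, and
`T : K →ₗ H` is a coalgebra homomorphism satisfying the relative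
Rota–Baxter identity `T(a)·T(b) = T(a₁·(T(a₂) ⇀ b))`.
Sweedler sums are expressed by applying linear maps to `Coalgebra.comul`.
-/

open TensorProduct Coalgebra LinearMap HopfAlgebra

variable (R H K : Type*) [CommRing R] [Ring H] [HopfAlgebra R H]
  [Ring K] [HopfAlgebra R K]

/-- Cocommutativity of a coalgebra. -/
def IsCocomm (A : Type*) [AddCommGroup A] [Module R A] [Coalgebra R A] : Prop :=
  ∀ x : A, (TensorProduct.comm R A A) (Coalgebra.comul x) = Coalgebra.comul x

/-- `K` is a left `H`-module bialgebra via `act`: a module, a module algebra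
and a module coalgebra. -/
structure IsModuleBialgebra (act : H ⊗[R] K →ₗ[R] K) : Prop where
  /-- `1 ⇀ a = a` -/
  one_act : ∀ a : K, act ((1 : H) ⊗ₜ a) = a
  /-- `(x·y) ⇀ a = x ⇀ (y ⇀ a)` -/
  mul_act : ∀ (x y : H) (a : K), act ((x * y) ⊗ₜ a) = act (x ⊗ₜ act (y ⊗ₜ a))
  /-- `x ⇀ (a·b) = (x₁ ⇀ a)·(x₂ ⇀ b)` -/
  act_mul : ∀ (x : H) (a b : K),
    act (x ⊗ₜ (a * b))
      = LinearMap.mul' R K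
          (TensorProduct.map (act ∘ₗ (TensorProduct.mk R H K).flip a)
            (act ∘ₗ (TensorProduct.mk R H K).flip b) (Coalgebra.comul x))
  /-- `x ⇀ 1 = ε(x)·1` -/
  act_one : ∀ x : H, act (x ⊗ₜ (1 : K)) = Coalgebra.counit (R := R) x • (1 : K)
  /-- `act` is comultiplicative -/
  comul_act : Coalgebra.comul ∘ₗ act
      = TensorProduct.map act act ∘ₗ (Coalgebra.comul (R := R) (A := H ⊗[R] K))
  /-- `act` is counital -/
  counit_act : Coalgebra.counit ∘ₗ act = (Coalgebra.counit (R := R) (A := H ⊗[R] K))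

/-- `T : K → H` is a coalgebra homomorphism. -/
structure IsCoalgHom (T : K →ₗ[R] H) : Prop where
  comul_comp : Coalgebra.comul ∘ₗ T = TensorProduct.map T T ∘ₗ Coalgebra.comul
  counit_comp : Coalgebra.counit ∘ₗ T = (Coalgebra.counit (R := R) (A := K))

/-- The descendent product `a *_T b = a₁·(T(a₂) ⇀ b)` as a linear map. -/
noncomputable def descProd (act : H ⊗[R] K →ₗ[R] K) (T : K →ₗ[R] H) :
    K ⊗[R] K →ₗ[R] K :=
  LinearMap.mul' R K
    ∘ₗ TensorProduct.map LinearMap.id (act ∘ₗ TensorProduct.map T LinearMap.id)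
    ∘ₗ (TensorProduct.assoc R K K K).toLinearMap
    ∘ₗ TensorProduct.map Coalgebra.comul LinearMap.id

/-- The relative Rota–Baxter identity `T(a)·T(b) = T(a₁·(T(a₂) ⇀ b))`. -/
def IsRelRotaBaxter (act : H ⊗[R] K →ₗ[R] K) (T : K →ₗ[R] H) : Prop :=
  ∀ a b : K, T a * T b = T (descProd R H K act T (a ⊗ₜ b))

/-- `S_T(a) = S_H(T(a₁)) ⇀ S_K(a₂)`. -/
noncomputable def descAntipode (act : H ⊗[R] K →ₗ[R] K) (T : K →ₗ[R] H) :
    K →ₗ[R] K :=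
  act ∘ₗ TensorProduct.map ((HopfAlgebra.antipode (R := R) (A := H)) ∘ₗ T)
          (HopfAlgebra.antipode (R := R) (A := K))
    ∘ₗ Coalgebra.comul

/-- The multiplication of the smash product `K ⋊ H`:
`(a # x)(b # y) = a·(x₁ ⇀ b) # x₂·y`. -/
noncomputable def smashMul (act : H ⊗[R] K →ₗ[R] K) :
    (K ⊗[R] H) ⊗[R] (K ⊗[R] H) →ₗ[R] K ⊗[R] H :=
  TensorProduct.map (LinearMap.mul' R K) LinearMap.id
    ∘ₗ (TensorProduct.assoc R K K H).symm.toLinearMap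
    ∘ₗ TensorProduct.map LinearMap.id
        (TensorProduct.map act (LinearMap.mul' R H)
          ∘ₗ (TensorProduct.tensorTensorTensorComm R H H K H).toLinearMap)
    ∘ₗ (TensorProduct.assoc R K (H ⊗[R] H) (K ⊗[R] H)).toLinearMap
    ∘ₗ TensorProduct.map (TensorProduct.map LinearMap.id Coalgebra.comul)
        LinearMap.id

/-- The graph embedding `a ↦ a₁ ⊗ T(a₂)` of `K` into `K ⊗ H`, whose image is
the graph `Gr_T = {a₁ ⊗ T(a₂) : a ∈ K}`. -/
noncomputable def graphEmb (T : K →ₗ[R] H) : K →ₗ[R] K ⊗[R] H :=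
  TensorProduct.map LinearMap.id T ∘ₗ Coalgebra.comul

/-! When `K` is cocommutative, `a ⊗ b ↦ a *_T b` is a composite of coalgebra maps (`Δ ⊗ id`,
the associator, `T ⊗ id`, the action and the multiplication of `K`), hence itself a coalgebra
map. Together with the Rota–Baxter identity `T (a *_T b) = T a · T b` this gives
`(a *_T b)₁ ⊗ T((a *_T b)₂) = (a₁ *_T b₁) ⊗ T(a₂) T(b₂)`. Expanding the smash product with
`Δ ∘ T = (T ⊗ T) ∘ Δ` gives `a₁ (T(a₂) ⇀ b₁) ⊗ T(a₃) T(b₂)`, which is the same element by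
coassociativity. -/

section

variable {R H K} {act : H ⊗[R] K →ₗ[R] K} {T : K →ₗ[R] H}

theorem IsCocomm.toCoalgebraIsCocomm {A : Type*} [AddCommGroup A] [Module R A] [Coalgebra R A]
    (h : _root_.IsCocomm R A) : Coalgebra.IsCocomm R A :=
  ⟨LinearMap.ext h⟩

noncomputable def IsCoalgHom.toCoalgHom (hT : IsCoalgHom R H K T) : K →ₗc[R] H where
  toLinearMap := T
  counit_comp := hT.counit_comp
  map_comp_comul := hT.comul_comp.symm

theorem IsCoalgHom.comul_apply (hT : IsCoalgHom R H K T) (x : K) :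
    comul (T x) = TensorProduct.map T T (comul x) :=
  LinearMap.congr_fun hT.comul_comp x

noncomputable def IsModuleBialgebra.toCoalgHom (hmb : IsModuleBialgebra R H K act) :
    H ⊗[R] K →ₗc[R] K where
  toLinearMap := act
  counit_comp := hmb.counit_act
  map_comp_comul := hmb.comul_act.symm

noncomputable def descProdCoalgHom (hmb : IsModuleBialgebra R H K act)
    (hT : IsCoalgHom R H K T) (hcoK : _root_.IsCocomm R K) : K ⊗[R] K →ₗc[R] K :=
  haveI := hcoK.toCoalgebraIsCocomm
  (Bialgebra.mulCoalgHom R K).comp <|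
    (CoalgHom.lTensor K (hmb.toCoalgHom.comp (CoalgHom.rTensor K hT.toCoalgHom))).comp <|
      (Coalgebra.TensorProduct.assoc R R K K K).toCoalgHom.comp <|
        CoalgHom.rTensor K (Coalgebra.comulCoalgHom R K)

theorem comul_descProd (hmb : IsModuleBialgebra R H K act)
    (hT : IsCoalgHom R H K T) (hcoK : _root_.IsCocomm R K) (x : K ⊗[R] K) :
    comul (descProd R H K act T x)
      = TensorProduct.map (descProd R H K act T) (descProd R H K act T) (comul x) :=
  (CoalgHomClass.map_comp_comul_apply (descProdCoalgHom hmb hT hcoK) x).symm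

theorem smashMul_tmul (x : K) (h : H) (y : K) (k : H) :
    smashMul R H K act ((x ⊗ₜ h) ⊗ₜ (y ⊗ₜ k))
      = TensorProduct.map (LinearMap.mulLeft R x ∘ₗ act ∘ₗ (TensorProduct.mk R H K).flip y)
          (LinearMap.mulRight R k) (comul (R := R) h) := by
  simp only [smashMul, LinearMap.comp_apply, TensorProduct.map_tmul, LinearMap.id_apply,
    LinearEquiv.coe_coe, TensorProduct.assoc_tmul]
  induction comul (R := R) h using TensorProduct.induction_on with
  | zero => simp
  | tmul h₁ h₂ => simp
  | add u v hu hv => simp only [TensorProduct.add_tmul, TensorProduct.tmul_add, map_add, hu, hv]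

theorem descProd_tmul (x y : K) :
    descProd R H K act T (x ⊗ₜ y)
      = LinearMap.mul' R K (LinearMap.lTensor K (act ∘ₗ (TensorProduct.mk R H K).flip y ∘ₗ T)
          (comul (R := R) x)) := by
  simp only [descProd, LinearMap.comp_apply, TensorProduct.map_tmul, LinearMap.id_apply,
    LinearEquiv.coe_coe]
  induction comul (R := R) x using TensorProduct.induction_on with
  | zero => simp
  | tmul x₁ x₂ => simp
  | add u v hu hv => simp only [TensorProduct.add_tmul, map_add, hu, hv]

theorem smashMul_graphEmb_tmul (hT : IsCoalgHom R H K T) (a y : K) (k : H) :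
    smashMul R H K act (graphEmb R H K T a ⊗ₜ (y ⊗ₜ k))
      = TensorProduct.map (descProd R H K act T ∘ₗ (TensorProduct.mk R K K).flip y)
          (LinearMap.mulRight R k ∘ₗ T) (comul (R := R) a) := by
  set f := act ∘ₗ (TensorProduct.mk R H K).flip y ∘ₗ T
  set g := LinearMap.mulRight R k ∘ₗ T
  have hmulLeft (x : K) (w : K ⊗[R] K) :
      TensorProduct.map (LinearMap.mulLeft R x ∘ₗ f) g w
        = TensorProduct.map (LinearMap.mul' R K ∘ₗ LinearMap.lTensor K f) g
            ((TensorProduct.assoc R K K K).symm (x ⊗ₜ w)) := by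
    induction w using TensorProduct.induction_on with
    | zero => simp
    | tmul w₁ w₂ => simp [f]
    | add u v hu hv => simp only [TensorProduct.tmul_add, map_add, hu, hv]
  have hdescProd : descProd R H K act T ∘ₗ (TensorProduct.mk R K K).flip y
      = LinearMap.mul' R K ∘ₗ LinearMap.lTensor K f ∘ₗ comul :=
    LinearMap.ext fun x => descProd_tmul x y
  have hL : smashMul R H K act (graphEmb R H K T a ⊗ₜ (y ⊗ₜ k))
      = TensorProduct.map (LinearMap.mul' R K ∘ₗ LinearMap.lTensor K f) g
          ((TensorProduct.assoc R K K K).symm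
            (LinearMap.lTensor K (comul (R := R)) (comul (R := R) a))) := by
    simp only [graphEmb, LinearMap.comp_apply]
    induction comul (R := R) a using TensorProduct.induction_on with
    | zero => simp
    | tmul x z =>
      rw [TensorProduct.map_tmul, smashMul_tmul, LinearMap.id_apply, LinearMap.lTensor_tmul,
        ← hmulLeft, hT.comul_apply, TensorProduct.map_map]
      rfl
    | add u v hu hv => simp only [TensorProduct.add_tmul, map_add, hu, hv]
  rw [hL, Coalgebra.coassoc_symm_apply, LinearMap.map_rTensor, hdescProd]
  rfl

theorem smashMul_graphEmb (hT : IsCoalgHom R H K T) (a b : K) :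
    smashMul R H K act (graphEmb R H K T a ⊗ₜ graphEmb R H K T b)
      = TensorProduct.map (descProd R H K act T) (LinearMap.mul' R H ∘ₗ TensorProduct.map T T)
          (comul (R := R) (a ⊗ₜ b)) := by
  rw [TensorProduct.comul_tmul,
    show graphEmb R H K T b = TensorProduct.map LinearMap.id T (comul (R := R) b) from rfl]
  induction comul (R := R) b using TensorProduct.induction_on with
  | zero => simp
  | tmul y z =>
    rw [TensorProduct.map_tmul, LinearMap.id_apply, smashMul_graphEmb_tmul hT]
    induction comul (R := R) a using TensorProduct.induction_on with
    | zero => simp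
    | tmul x₁ x₂ => simp
    | add u v hu hv => simp only [TensorProduct.add_tmul, map_add, hu, hv]
  | add u v hu hv => simp only [TensorProduct.tmul_add, map_add, hu, hv]

theorem IsRelRotaBaxter.comp_descProd (hrb : IsRelRotaBaxter R H K act T) :
    T ∘ₗ descProd R H K act T = LinearMap.mul' R H ∘ₗ TensorProduct.map T T := by
  ext a b
  exact (hrb a b).symm

theorem graphEmb_descProd (hmb : IsModuleBialgebra R H K act) (hT : IsCoalgHom R H K T)
    (hrb : IsRelRotaBaxter R H K act T) (hcoK : _root_.IsCocomm R K) (x : K ⊗[R] K) :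
    graphEmb R H K T (descProd R H K act T x)
      = TensorProduct.map (descProd R H K act T) (LinearMap.mul' R H ∘ₗ TensorProduct.map T T)
          (comul (R := R) x) := by
  rw [graphEmb, LinearMap.comp_apply, comul_descProd hmb hT hcoK, ← LinearMap.comp_apply,
    ← TensorProduct.map_comp, LinearMap.id_comp, hrb.comp_descProd]

end

theorem graph_closed (act : H ⊗[R] K →ₗ[R] K) (T : K →ₗ[R] H)
    (hmb : IsModuleBialgebra R H K act) (hT : IsCoalgHom R H K T)
    (hrb : IsRelRotaBaxter R H K act T)
    (hcoK : _root_.IsCocomm R K) (a b : K) :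
    smashMul R H K act (graphEmb R H K T a ⊗ₜ graphEmb R H K T b)
      = graphEmb R H K T (descProd R H K act T (a ⊗ₜ b)) := by
  rw [smashMul_graphEmb hT, graphEmb_descProd hmb hT hrb hcoK]
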